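/- arXiv:2106.13550 — 2 statements merged into one kernel-verified Lean document; each statement's English description precedes it below -/
import Mathlib

section
/- For k ≥ 2, the Fibonacci polynomial x^k − x^{k−1} − ⋯ − x − 1 is irreducible over ℚ. -/
/-!
Multiplying by `X - 1` turns `p_k` into `X^(k+1) - 2X^k + 1`, so `w = z⁻¹` satisfies
`w^(k+1) = 2w - 1` for every root `z` of `p_k`. If moreover `‖w‖ < 1`, then `(k+1)‖w‖^k < 2`.
Two distinct such `w₁, w₂` would give `∑ w₁^i w₂^(k-i) = 2`, and a double one `(k+1) w^k = 2`;
both contradict the bound, so `p_k` has at most one root, counted with multiplicity, outside the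
open unit disc. In a factorization `p_k = f g` over `ℤ` into monic non-constant factors,
`f(0) g(0) = -1`, so the roots of each factor have product of norm `1` and one of them lies outside
the open unit disc. Gauss's lemma passes from `ℤ` to `ℚ`.
-/

open Polynomial Finset

theorem sub_one_mul_pow_sub_geom_sum {R : Type*} [CommRing R] (x : R) (k : ℕ) :
    (x - 1) * (x ^ k - ∑ i ∈ range k, x ^ i) = x ^ (k + 1) - 2 * x ^ k + 1 := by
  linear_combination -(geom_sum_mul x k)

theorem succ_mul_pow_lt_two_of_le_pow_succ {t : ℝ} {k : ℕ} (ht₀ : 0 ≤ t) (ht₁ : t < 1)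
    (h : 2 * t - 1 ≤ t ^ (k + 1)) : (k + 1) * t ^ k < 2 := by
  rcases k.eq_zero_or_pos with rfl | hk
  · norm_num
  have hsum : ∑ i ∈ range k, t ^ (i + 1) ≤ 1 := by
    have hshift : ∑ i ∈ range k, t ^ (i + 1) = t * ∑ i ∈ range k, t ^ i := by
      simp only [mul_sum, pow_succ']
    have hfactor : (1 - t) * (1 - t * ∑ i ∈ range k, t ^ i) = t ^ (k + 1) - 2 * t + 1 := by
      linear_combination t * geom_sum_mul t k
    rw [hshift, ← sub_nonneg]
    exact nonneg_of_mul_nonneg_right (by linarith) (sub_pos.2 ht₁)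
  have hterm : k * t ^ k ≤ ∑ i ∈ range k, t ^ (i + 1) := by
    simpa using card_nsmul_le_sum (range k) (fun i => t ^ (i + 1)) (t ^ k) fun i hi =>
      pow_le_pow_of_le_one ht₀ ht₁.le (mem_range.1 hi)
  have : t ^ k < 1 := pow_lt_one₀ ht₀ ht₁ hk.ne'
  linarith

theorem norm_multiset_prod_lt_one {K : Type*} [NormedField K] {s : Multiset K} (hs : s ≠ 0)
    (h : ∀ x ∈ s, ‖x‖ < 1) : ‖s.prod‖ < 1 := by
  induction s using Multiset.induction_on with
  | empty => exact absurd rfl hs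
  | cons a t ih =>
    have ha := h a (Multiset.mem_cons_self a t)
    rw [Multiset.prod_cons, norm_mul]
    rcases eq_or_ne t 0 with rfl | ht
    · simpa using ha
    · exact mul_lt_one_of_nonneg_of_lt_one_left (norm_nonneg a) ha
        (ih ht fun x hx => h x (Multiset.mem_cons_of_mem hx)).le

theorem exists_isRoot_one_le_norm {K : Type*} [NormedField K] [IsAlgClosed K] {f : K[X]}
    (hdeg : f.natDegree ≠ 0) (hcoeff : ‖f.leadingCoeff‖ ≤ ‖f.coeff 0‖) :
    ∃ z, f.IsRoot z ∧ 1 ≤ ‖z‖ := by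
  by_contra! hsmall
  have hsplit := IsAlgClosed.splits f
  have hf : f ≠ 0 := by rintro rfl; simp at hdeg
  have hroots : f.roots ≠ 0 := by
    rw [← Multiset.card_pos, ← hsplit.natDegree_eq_card_roots]; omega
  have hprod : ‖f.roots.prod‖ < 1 :=
    norm_multiset_prod_lt_one hroots fun z hz => hsmall z (isRoot_of_mem_roots hz)
  have : ‖f.coeff 0‖ < ‖f.leadingCoeff‖ := by
    rw [hsplit.coeff_zero_eq_leadingCoeff_mul_prod_roots, norm_mul, norm_mul, norm_pow, norm_neg,
      norm_one, one_pow, one_mul]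
    exact mul_lt_of_lt_one_right (norm_pos_iff.2 (leadingCoeff_ne_zero.2 hf)) hprod
  exact this.not_ge hcoeff

theorem monic_X_pow_sub_sum_X_pow {R : Type*} [CommRing R] [Nontrivial R] (k : ℕ) :
    ((X : R[X]) ^ k - ∑ i ∈ range k, X ^ i).Monic := by
  refine monic_X_pow_sub (degree_sum_le _ _ |>.trans_lt ?_)
  refine (Finset.sup_lt_iff (WithBot.bot_lt_coe k)).2 fun i hi => ?_
  rw [degree_X_pow]
  exact Nat.cast_lt.2 (mem_range.1 hi)

namespace FibonacciPolynomial

theorem succ_mul_norm_pow_lt_two {w : ℂ} {k : ℕ} (hw : w ^ (k + 1) = 2 * w - 1) (hw₁ : ‖w‖ < 1) :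
    (k + 1) * ‖w‖ ^ k < 2 := by
  refine succ_mul_pow_lt_two_of_le_pow_succ (norm_nonneg w) hw₁ ?_
  calc 2 * ‖w‖ - 1 = ‖2 * w‖ - ‖(1 : ℂ)‖ := by simp
    _ ≤ ‖2 * w - 1‖ := norm_sub_norm_le _ _
    _ = ‖w‖ ^ (k + 1) := by rw [← hw, norm_pow]

theorem norm_sum_pow_mul_pow_lt_two {w₁ w₂ : ℂ} {k : ℕ} (h₁ : w₁ ^ (k + 1) = 2 * w₁ - 1)
    (h₂ : w₂ ^ (k + 1) = 2 * w₂ - 1) (hw₁ : ‖w₁‖ < 1) (hw₂ : ‖w₂‖ < 1) :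
    ‖∑ i ∈ range (k + 1), w₁ ^ i * w₂ ^ (k - i)‖ < 2 := by
  set m := max ‖w₁‖ ‖w₂‖ with hm_def
  have hm : (k + 1) * m ^ k < 2 := by
    rcases max_choice ‖w₁‖ ‖w₂‖ with h | h <;> rw [hm_def, h]
    exacts [succ_mul_norm_pow_lt_two h₁ hw₁, succ_mul_norm_pow_lt_two h₂ hw₂]
  calc ‖∑ i ∈ range (k + 1), w₁ ^ i * w₂ ^ (k - i)‖
      ≤ ∑ i ∈ range (k + 1), ‖w₁‖ ^ i * ‖w₂‖ ^ (k - i) := by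
        simpa only [norm_mul, norm_pow] using
          norm_sum_le (range (k + 1)) fun i => w₁ ^ i * w₂ ^ (k - i)
    _ ≤ ∑ i ∈ range (k + 1), m ^ i * m ^ (k - i) := by
        gcongr
        exacts [le_max_left _ _, le_max_right _ _]
    _ = (k + 1) * m ^ k := by simpa using geom_sum₂_self m (k + 1)
    _ < 2 := hm

theorem sum_pow_mul_pow_eq_two_of_ne {R : Type*} [CommRing R] [IsDomain R] {w₁ w₂ : R} {k : ℕ}
    (h₁ : w₁ ^ (k + 1) = 2 * w₁ - 1) (h₂ : w₂ ^ (k + 1) = 2 * w₂ - 1) (hne : w₁ ≠ w₂) :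
    ∑ i ∈ range (k + 1), w₁ ^ i * w₂ ^ (k - i) = 2 := by
  refine mul_right_cancel₀ (sub_ne_zero.2 hne) ?_
  have := geom_sum₂_mul w₁ w₂ (k + 1)
  simp only [Nat.add_sub_cancel] at this
  linear_combination this + h₁ - h₂

theorem inv_pow_succ_eq_two_mul_inv_sub_one {K : Type*} [Field K] {z : K} {k : ℕ}
    (hz : z ^ (k + 1) - 2 * z ^ k + 1 = 0) : z⁻¹ ^ (k + 1) = 2 * z⁻¹ - 1 := by
  have hz₀ : z ≠ 0 := by rintro rfl; rcases k with _ | k <;> norm_num at hz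
  rw [inv_pow]
  field_simp
  linear_combination z * hz

/-- A double root `z` of `X^(k+1) - 2X^k + 1` gives a double root `z⁻¹` of `X^(k+1) - 2X + 1`. -/
theorem succ_mul_inv_pow_eq_two {K : Type*} [Field K] {z : K} {k : ℕ} (hk : k ≠ 0)
    (hz : z ^ (k + 1) - 2 * z ^ k + 1 = 0) (hz' : (k + 1) * z ^ k - 2 * k * z ^ (k - 1) = 0) :
    (k + 1) * z⁻¹ ^ k = 2 := by
  have hz₀ : z ≠ 0 := by rintro rfl; rcases k with _ | k <;> norm_num at hz
  obtain ⟨m, rfl⟩ := Nat.exists_eq_add_one_of_ne_zero hk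
  rw [inv_pow]
  field_simp
  simp only [Nat.add_sub_cancel] at hz'
  push_cast at hz' ⊢
  linear_combination (m + 2 : K) * hz - z * hz'

theorem eq_one_of_norm_eq_one {z : ℂ} {k : ℕ} (hz : z ^ (k + 1) - 2 * z ^ k + 1 = 0)
    (h : ‖z‖ = 1) : z = 1 := by
  have h2 : ‖2 - z‖ = 1 := by
    have : z ^ k * (2 - z) = 1 := by linear_combination -hz
    simpa [h] using congr_arg norm this
  have := eq_of_norm_eq_of_norm_add_eq (h.trans h2.symm) (by simp [h, h2]; norm_num)
  linear_combination this / 2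

theorem norm_inv_lt_one {k : ℕ} (hk : 2 ≤ k) {z : ℂ} (hz : z ^ k - ∑ i ∈ range k, z ^ i = 0)
    (h1 : 1 ≤ ‖z‖) : ‖z⁻¹‖ < 1 := by
  rw [norm_inv]
  refine inv_lt_one_of_one_lt₀ (h1.lt_of_ne fun h => ?_)
  obtain rfl := eq_one_of_norm_eq_one (by rw [← sub_one_mul_pow_sub_geom_sum, hz, mul_zero])
    h.symm
  have hk1 : (1 : ℂ) - k = 0 := by simpa using hz
  have : k = 1 := by exact_mod_cast (by linear_combination -hk1 : (k : ℂ) = 1)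
  omega

theorem norm_lt_one_or_norm_lt_one_of_mul_eq {k : ℕ} (hk : 2 ≤ k) {a b : ℂ[X]}
    (hab : a * b = X ^ k - ∑ i ∈ range k, X ^ i) {z₁ z₂ : ℂ} (h₁ : a.IsRoot z₁)
    (h₂ : b.IsRoot z₂) : ‖z₁‖ < 1 ∨ ‖z₂‖ < 1 := by
  by_contra! hbig
  have hP : ∀ z, (a * b).IsRoot z → z ^ k - ∑ i ∈ range k, z ^ i = 0 := fun z hz => by
    simpa [hab, eval_finsetSum] using hz
  have hF : ∀ z, (a * b).IsRoot z → z ^ (k + 1) - 2 * z ^ k + 1 = 0 := fun z hz => by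
    rw [← sub_one_mul_pow_sub_geom_sum, hP z hz, mul_zero]
  have hr₁ : (a * b).IsRoot z₁ := by simp [h₁.eq_zero]
  have hr₂ : (a * b).IsRoot z₂ := by simp [h₂.eq_zero]
  have hw₁ := inv_pow_succ_eq_two_mul_inv_sub_one (hF z₁ hr₁)
  have hw₂ := inv_pow_succ_eq_two_mul_inv_sub_one (hF z₂ hr₂)
  suffices hsum : ∑ i ∈ range (k + 1), z₁⁻¹ ^ i * z₂⁻¹ ^ (k - i) = 2 by
    have := norm_sum_pow_mul_pow_lt_two hw₁ hw₂
      (norm_inv_lt_one hk (hP z₁ hr₁) hbig.1) (norm_inv_lt_one hk (hP z₂ hr₂) hbig.2)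
    rw [hsum] at this
    norm_num at this
  rcases eq_or_ne z₁ z₂ with rfl | hne
  · have hder : (derivative ((X - 1) * (a * b))).eval z₁ = 0 := by
      simp [derivative_mul, h₁.eq_zero, h₂.eq_zero]
    rw [hab, sub_one_mul_pow_sub_geom_sum] at hder
    simp [derivative_X_pow] at hder
    calc ∑ i ∈ range (k + 1), z₁⁻¹ ^ i * z₁⁻¹ ^ (k - i) = (k + 1) * z₁⁻¹ ^ k := by
          simpa using geom_sum₂_self z₁⁻¹ (k + 1)
      _ = 2 := succ_mul_inv_pow_eq_two (by omega) (hF z₁ hr₁) (by linear_combination hder)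
  · exact sum_pow_mul_pow_eq_two_of_ne hw₁ hw₂ (inv_injective.ne hne)

theorem irreducible_int {k : ℕ} (hk : 2 ≤ k) :
    Irreducible ((X : ℤ[X]) ^ k - ∑ i ∈ range k, X ^ i) := by
  have hP0 : ((X : ℤ[X]) ^ k - ∑ i ∈ range k, X ^ i).coeff 0 = -1 := by
    simp [coeff_zero_eq_eval_zero, eval_finsetSum, show k ≠ 0 by omega]
  refine (monic_X_pow_sub_sum_X_pow k).irreducible_iff_natDegree.2
    ⟨fun h => by simp [h] at hP0, fun f g hf hg hfg => ?_⟩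
  by_contra! hdeg
  have hunit : IsUnit (f.coeff 0) ∧ IsUnit (g.coeff 0) := by
    rw [← IsUnit.mul_iff, ← mul_coeff_zero, hfg, hP0]
    exact isUnit_one.neg
  have hbig : ∀ p : ℤ[X], p.Monic → p.natDegree ≠ 0 → IsUnit (p.coeff 0) →
      ∃ z, (p.map (Int.castRingHom ℂ)).IsRoot z ∧ 1 ≤ ‖z‖ := fun p hp hpdeg hp0 =>
    exists_isRoot_one_le_norm (by rwa [hp.natDegree_map]) (by
      rw [(hp.map _).leadingCoeff, coeff_map]
      simp [← Int.cast_abs, Int.isUnit_iff_abs_eq.1 hp0])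
  obtain ⟨z₁, h₁, hz₁⟩ := hbig f hf hdeg.1 hunit.1
  obtain ⟨z₂, h₂, hz₂⟩ := hbig g hg hdeg.2 hunit.2
  have hab : f.map (Int.castRingHom ℂ) * g.map (Int.castRingHom ℂ) =
      X ^ k - ∑ i ∈ range k, X ^ i := by
    simp [← Polynomial.map_mul, hfg, Polynomial.map_sum]
  rcases norm_lt_one_or_norm_lt_one_of_mul_eq hk hab h₁ h₂ with h | h <;> linarith

end FibonacciPolynomial

theorem fibonacci_polynomial_irreducible (k : ℕ) (hk : 2 ≤ k) :
    Irreducible ((X : ℚ[X]) ^ k - ∑ i ∈ Finset.range k, X ^ i) := by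
  simpa [Polynomial.map_sum] using (IsPrimitive.Int.irreducible_iff_irreducible_map_cast
    (monic_X_pow_sub_sum_X_pow k).isPrimitive).1 (FibonacciPolynomial.irreducible_int hk)
end

section
/- For k ≥ 2, the expected value of a random bit in a random binary word of length n avoiding k consecutive 1s converges, as n → ∞, to E_k = (k x^k − k x^{k−1} − x^k + 1)/(k x^k − k x^{k−1} + x^{2k} − 3 x^k + 2) evaluated at x = 1/φ_k, where φ_k is the unique positive root of x^k − x^{k−1} − ⋯ − x − 1. -/
/-!
Write `x = 1 / φ`, so that `x ^ k + ⋯ + x = 1`. Cutting a word at one of its zeros shows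
`v n + ∑ B i * B (n - 1 - i) = n * B n`, and cutting off its leading run of ones shows
`B (n + k) = B n + ⋯ + B (n + k - 1)`. Hence `u n = B n * x ^ (n + 1)` satisfies a recurrence
expressing each term as a convex combination, with positive weights `x ^ k, …, x`, of the `k`
previous ones. Such a sequence converges, because the oscillation over windows of length `k`
contracts, and its limit `(1 - x) / (1 + k - 2 k x)` is read off from a weighted window sum that the
recurrence conserves. Finally `v n / (n B n) = 1 - (n⁻¹ ∑ u i * u (n - 1 - i)) / u n`, and the
Cesàro mean of the convolution tends to the square of the limit.
-/

open Filter Polynomial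

def AvoidsOnes (k : ℕ) (w : List Bool) : Prop :=
  ¬ (List.replicate k true <:+: w)

instance (k : ℕ) (w : List Bool) : Decidable (AvoidsOnes k w) :=
  inferInstanceAs (Decidable ¬ _)

/-- Number of binary words of length `n` with no run of `k` ones. -/
def B (n k : ℕ) : ℕ :=
  (Finset.univ.filter (fun w : Fin n → Bool => AvoidsOnes k (List.ofFn w))).card

/-- Total number of 1s over all such words. -/
def v (n k : ℕ) : ℕ :=
  ∑ w ∈ Finset.univ.filter (fun w : Fin n → Bool => AvoidsOnes k (List.ofFn w)),
    (List.ofFn w).count true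

open Finset Topology

theorem List.infix_append_cons_iff_of_notMem {α : Type*} {p xs ys : List α} {a : α}
    (ha : a ∉ p) : p <:+: xs ++ a :: ys ↔ p <:+: xs ∨ p <:+: ys := by
  refine ⟨fun h => ?_, fun h => h.elim List.infix_append_of_infix_left
    fun h => List.infix_append_of_infix_right (List.infix_cons h)⟩
  rcases List.infix_append_iff.1 h with h | h | ⟨l₁, l₂, rfl, hl₁, hl₂⟩
  · exact Or.inl h
  · rcases List.infix_cons_iff.1 h with h | h
    · rcases List.prefix_cons_iff.1 h with rfl | ⟨t, rfl, -⟩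
      · exact Or.inr List.nil_infix
      · simp at ha
    · exact Or.inr h
  · rcases List.prefix_cons_iff.1 hl₂ with rfl | ⟨t, rfl, -⟩
    · simpa using Or.inl hl₁.isInfix
    · simp at ha

theorem avoidsOnes_append_false_cons {k : ℕ} {l r : List Bool} :
    AvoidsOnes k (l ++ false :: r) ↔ AvoidsOnes k l ∧ AvoidsOnes k r := by
  simp only [AvoidsOnes, List.infix_append_cons_iff_of_notMem (by simp [List.mem_replicate] :
    false ∉ List.replicate k true), not_or]

theorem avoidsOnes_of_length_lt {k : ℕ} {l : List Bool} (h : l.length < k) : AvoidsOnes k l :=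
  fun hl => by simpa using (hl.length_le.trans_lt h)

theorem avoidsOnes_replicate_false {k : ℕ} (hk : 0 < k) (n : ℕ) :
    AvoidsOnes k (List.replicate n false) :=
  fun hl => by simpa [hk.ne'] using hl.subset (List.mem_replicate.2 ⟨hk.ne', rfl⟩)

def words (n : ℕ) : Finset (List Bool) :=
  univ.map ⟨List.ofFn (n := n), List.ofFn_injective⟩

def goodWords (k n : ℕ) : Finset (List Bool) := {l ∈ words n | AvoidsOnes k l}

theorem mem_words {n : ℕ} {l : List Bool} : l ∈ words n ↔ l.length = n := by
  refine ⟨fun h => ?_, fun h => ?_⟩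
  · obtain ⟨w, -, rfl⟩ := mem_map.1 h
    simp
  · subst h
    exact mem_map.2 ⟨fun i => l[i], mem_univ _, List.ofFn_getElem⟩

theorem mem_goodWords {k n : ℕ} {l : List Bool} :
    l ∈ goodWords k n ↔ l.length = n ∧ AvoidsOnes k l := by
  simp [goodWords, mem_words]

theorem card_goodWords (k n : ℕ) : #(goodWords k n) = B n k := by
  rw [goodWords, words, filter_map, card_map]; rfl

theorem v_eq_sum_count (k n : ℕ) : v n k = ∑ l ∈ goodWords k n, l.count true := by
  rw [goodWords, words, filter_map, sum_map]; rfl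

theorem List.take_append_cons_drop {α : Type*} {l : List α} {a : ℕ} {x : α}
    (h : l[a]? = some x) : l.take a ++ x :: l.drop (a + 1) = l := by
  obtain ⟨ha, rfl⟩ := getElem?_eq_some_iff.1 h
  rw [← List.drop_eq_getElem_cons ha, List.take_append_drop]

theorem card_goodWords_filter_getElem?_eq_false (k a b : ℕ) :
    #{l ∈ goodWords k (a + 1 + b) | l[a]? = some false} = B a k * B b k := by
  rw [← card_goodWords, ← card_goodWords, ← card_product]
  refine card_nbij' (fun l => (l.take a, l.drop (a + 1))) (fun p => p.1 ++ false :: p.2)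
    (fun l hl => ?_) (fun p hp => ?_) (fun l hl => ?_) (fun p hp => ?_)
  · simp only [coe_filter, Set.mem_ofPred_eq, mem_goodWords] at hl
    obtain ⟨⟨hlen, hgood⟩, hfalse⟩ := hl
    rw [← List.take_append_cons_drop hfalse, avoidsOnes_append_false_cons] at hgood
    simp only [coe_product, Set.mem_prod, mem_coe, mem_goodWords, List.length_take,
      List.length_drop]
    exact ⟨⟨by omega, hgood.1⟩, by omega, hgood.2⟩
  · simp only [coe_product, Set.mem_prod, mem_coe, mem_goodWords] at hp
    obtain ⟨⟨hl, hgl⟩, hr, hgr⟩ := hp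
    simp only [coe_filter, Set.mem_ofPred_eq, mem_goodWords, avoidsOnes_append_false_cons]
    refine ⟨⟨by simp only [List.length_append, List.length_cons]; omega, hgl, hgr⟩, by simp [hl]⟩
  · exact List.take_append_cons_drop (mem_filter.1 hl).2
  · obtain ⟨l, r⟩ := p
    obtain ⟨⟨rfl, -⟩, -⟩ : (l.length = a ∧ _) ∧ _ := by simpa [mem_goodWords] using hp
    simp

theorem List.count_eq_card_filter_range {α : Type*} [DecidableEq α] (l : List α) (a : α) :
    l.count a = #{i ∈ Finset.range l.length | l[i]? = some a} := by
  induction l with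
  | nil => simp
  | cons b l ih =>
    rw [card_filter, List.length_cons, Finset.sum_range_succ', ← card_filter]
    simp only [List.getElem?_cons_succ, List.getElem?_cons_zero, Option.some.injEq]
    rw [← ih, List.count_cons]
    simp only [beq_iff_eq]

theorem v_add_sum_mul_eq (k n : ℕ) :
    v n k + ∑ i ∈ range n, B i k * B (n - 1 - i) k = n * B n k := by
  have hsplit : ∀ i ∈ range n, B i k * B (n - 1 - i) k =
      #{l ∈ goodWords k n | l[i]? = some false} := fun i hi => by
    have := card_goodWords_filter_getElem?_eq_false k i (n - 1 - i)
    rwa [show i + 1 + (n - 1 - i) = n by rw [mem_range] at hi; omega, eq_comm] at this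
  have hcount : ∀ l ∈ goodWords k n, #{i ∈ range n | l[i]? = some false} = l.count false :=
    fun l hl => by rw [List.count_eq_card_filter_range, (mem_goodWords.1 hl).1]
  calc v n k + ∑ i ∈ range n, B i k * B (n - 1 - i) k
      = ∑ l ∈ goodWords k n, (l.count true + l.count false) := by
        rw [sum_congr rfl hsplit, v_eq_sum_count, sum_add_distrib, ← sum_congr rfl hcount]
        exact congrArg _ (sum_card_bipartiteAbove_eq_sum_card_bipartiteBelow _)
    _ = ∑ l ∈ goodWords k n, n :=
        sum_congr rfl fun l hl => by
          rw [List.count_true_add_count_false, (mem_goodWords.1 hl).1]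
    _ = n * B n k := by rw [sum_const, card_goodWords, smul_eq_mul, mul_comm]

theorem List.replicate_idxOf_false_prefix (l : List Bool) :
    List.replicate (l.idxOf false) true <+: l := by
  induction l with
  | nil => simp
  | cons b l ih => cases b <;> simp [List.replicate_succ, ih]

theorem List.replicate_append_false_cons_drop_idxOf {l : List Bool} (h : false ∈ l) :
    List.replicate (l.idxOf false) true ++ false :: l.drop (l.idxOf false + 1) = l := by
  induction l with
  | nil => simp at h
  | cons b l ih => cases b <;> simp_all [List.replicate_succ]

theorem List.idxOf_false_replicate_append_false_cons (t : ℕ) (r : List Bool) :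
    (List.replicate t true ++ false :: r).idxOf false = t := by
  rw [List.idxOf_append_of_notMem (by simp [List.mem_replicate]), List.idxOf_cons_self]
  simp

theorem card_goodWords_filter_idxOf_false_eq {k t : ℕ} (ht : t < k) (m : ℕ) :
    #{l ∈ goodWords k (t + 1 + m) | l.idxOf false = t} = B m k := by
  rw [← card_goodWords]
  refine card_nbij' (fun l => l.drop (t + 1)) (fun r => List.replicate t true ++ false :: r)
    (fun l hl => ?_) (fun r hr => ?_) (fun l hl => ?_) (fun r hr => ?_)
  · obtain ⟨⟨hlen, hgood⟩, hidx⟩ : (l.length = t + 1 + m ∧ AvoidsOnes k l) ∧ l.idxOf false = t := by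
      simpa [mem_goodWords] using hl
    have hmem : false ∈ l := List.idxOf_lt_length_iff.1 (by omega)
    rw [← List.replicate_append_false_cons_drop_idxOf hmem, avoidsOnes_append_false_cons,
      hidx] at hgood
    simpa [mem_goodWords, hlen] using hgood.2
  · rw [coe_filter, Set.mem_ofPred_eq, mem_goodWords, avoidsOnes_append_false_cons,
      List.idxOf_false_replicate_append_false_cons]
    obtain ⟨hlen, hgood⟩ := mem_goodWords.1 hr
    have hlen' : (List.replicate t true ++ false :: r).length = t + 1 + m := by
      simp only [List.length_append, List.length_cons, List.length_replicate]; omega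
    exact ⟨⟨hlen', avoidsOnes_of_length_lt (by simpa), hgood⟩, rfl⟩
  · obtain ⟨⟨hlen, -⟩, hidx⟩ := (mem_filter.1 hl).imp_left mem_goodWords.1
    have hmem : false ∈ l := List.idxOf_lt_length_iff.1 (by omega)
    simpa [hidx] using List.replicate_append_false_cons_drop_idxOf hmem
  · simp [List.drop_append]

theorem B_add_eq_sum (k n : ℕ) : B (n + k) k = ∑ j ∈ range k, B (n + j) k := by
  rw [← card_goodWords, card_eq_sum_card_fiberwise (f := fun l => l.idxOf false)
    (t := range k) fun l hl => ?_, ← sum_range_reflect]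
  · refine sum_congr rfl fun t ht => ?_
    rw [mem_range] at ht
    rw [← card_goodWords_filter_idxOf_false_eq (k := k) (by omega : k - 1 - t < k) (n + t),
      show k - 1 - t + 1 + (n + t) = n + k by omega]
  · obtain ⟨hlen, hgood⟩ := mem_goodWords.1 hl
    refine mem_range.2 (lt_of_not_ge fun hle => hgood ?_)
    exact (List.prefix_replicate_iff.2 ⟨by simpa, by simp⟩ |>.trans
      (List.replicate_idxOf_false_prefix l)).isInfix

theorem B_eq_two_pow {n k : ℕ} (h : n < k) : B n k = 2 ^ n := by
  rw [B, filter_true_of_mem fun w _ => avoidsOnes_of_length_lt (by simpa using h)]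
  simp

theorem B_pos {k : ℕ} (hk : 0 < k) (n : ℕ) : 0 < B n k := by
  rw [← card_goodWords]
  exact card_pos.2 ⟨_, mem_goodWords.2 ⟨List.length_replicate, avoidsOnes_replicate_false hk n⟩⟩

section Window

variable {k : ℕ} (u : ℕ → ℝ) (hk : 0 < k)

def windowMax (n : ℕ) : ℝ :=
  (range k).sup' (nonempty_range_iff.2 hk.ne') fun i => u (n + i)

def windowMin (n : ℕ) : ℝ :=
  (range k).inf' (nonempty_range_iff.2 hk.ne') fun i => u (n + i)

variable {u}

theorem le_windowMax {n i : ℕ} (hi : i < k) : u (n + i) ≤ windowMax u hk n :=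
  le_sup' (fun i => u (n + i)) (mem_range.2 hi)

theorem windowMin_le {n i : ℕ} (hi : i < k) : windowMin u hk n ≤ u (n + i) :=
  inf'_le (fun i => u (n + i)) (mem_range.2 hi)

theorem windowMin_le_windowMax (n : ℕ) : windowMin u hk n ≤ windowMax u hk n :=
  (windowMin_le hk hk).trans (le_windowMax hk hk)

end Window

section ConvexRecurrence

variable {k : ℕ} {w u : ℕ → ℝ} (hw0 : ∀ i < k, 0 ≤ w i) (hw1 : ∑ i ∈ range k, w i = 1)
  (hrec : ∀ n, u (n + k) = ∑ i ∈ range k, w i * u (n + i))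
include hw0 hw1 hrec

theorem apply_add_le_of_window_le {n : ℕ} {b : ℝ} (hb : ∀ i < k, u (n + i) ≤ b) (j : ℕ) :
    u (n + j) ≤ b := by
  induction j using Nat.strong_induction_on with
  | _ j ih =>
    rcases lt_or_ge j k with hj | hj
    · exact hb j hj
    obtain ⟨j, rfl⟩ := Nat.exists_eq_add_of_le' hj
    calc u (n + (j + k)) = ∑ i ∈ range k, w i * u (n + (j + i)) := by
          rw [← add_assoc, hrec]; simp only [add_assoc]
      _ ≤ ∑ i ∈ range k, w i * b := sum_le_sum fun i hi =>
          mul_le_mul_of_nonneg_left (ih _ (by rw [mem_range] at hi; omega)) (hw0 i (mem_range.1 hi))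
      _ = b := by rw [← sum_mul, hw1, one_mul]

theorem le_apply_add_of_le_window {n : ℕ} {a : ℝ} (ha : ∀ i < k, a ≤ u (n + i)) (j : ℕ) :
    a ≤ u (n + j) :=
  neg_le_neg_iff.1 <| apply_add_le_of_window_le (u := -u) hw0 hw1
    (fun n => by simp [hrec, sum_neg_distrib]) (fun i hi => neg_le_neg (ha i hi)) j

theorem apply_add_le_sub_mul {n i₀ : ℕ} {b : ℝ} (hb : ∀ i < k, u (n + i) ≤ b) (hi₀ : i₀ < k) :
    u (n + k) ≤ b - w i₀ * (b - u (n + i₀)) := by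
  have hterm : w i₀ * (b - u (n + i₀)) ≤ ∑ i ∈ range k, w i * (b - u (n + i)) :=
    single_le_sum (f := fun i => w i * (b - u (n + i)))
      (fun i hi => mul_nonneg (hw0 i (mem_range.1 hi)) (sub_nonneg.2 (hb i (mem_range.1 hi))))
      (mem_range.2 hi₀)
  calc u (n + k) = b - ∑ i ∈ range k, w i * (b - u (n + i)) := by
        simp only [hrec, mul_sub, sum_sub_distrib, ← sum_mul, hw1, one_mul, sub_sub_cancel]
    _ ≤ b - w i₀ * (b - u (n + i₀)) := sub_le_sub_left hterm b

variable (hk : 0 < k)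

theorem windowMax_antitone : Antitone (windowMax u hk) :=
  antitone_nat_of_succ_le fun n => sup'_le _ _ fun i _ => by
    rw [add_assoc]
    exact apply_add_le_of_window_le hw0 hw1 hrec (fun i hi => le_windowMax hk hi) _

theorem windowMin_monotone : Monotone (windowMin u hk) :=
  monotone_nat_of_le_succ fun n => le_inf' _ _ fun i _ => by
    rw [add_assoc]
    exact le_apply_add_of_le_window hw0 hw1 hrec (fun i hi => windowMin_le hk hi) _

/-- The window minimum enters `u (n + k)` with weight at least `δ`, and `u (n + k)` in turn enters
every later term of the next window with weight at least `δ`. -/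
theorem windowMax_add_le {δ : ℝ} (hδ0 : 0 ≤ δ) (hδ : ∀ i < k, δ ≤ w i) (n : ℕ) :
    windowMax u hk (n + k) ≤
      windowMax u hk n - δ ^ 2 * (windowMax u hk n - windowMin u hk n) := by
  set M := windowMax u hk n
  set m := windowMin u hk n
  have hmM : 0 ≤ M - m := sub_nonneg.2 (windowMin_le_windowMax hk n)
  have hδ1 : δ ≤ 1 := (hδ 0 hk).trans (hw1 ▸ single_le_sum (fun i hi => hw0 i (mem_range.1 hi))
    (mem_range.2 hk))
  have hM : ∀ i < k, u (n + i) ≤ M := fun i hi => le_windowMax hk hi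
  obtain ⟨i₀, hi₀, hmin⟩ := exists_mem_eq_inf' (nonempty_range_iff.2 hk.ne') fun i => u (n + i)
  have hfirst : u (n + k) ≤ M - δ * (M - m) := by
    refine (apply_add_le_sub_mul hw0 hw1 hrec hM (mem_range.1 hi₀)).trans ?_
    rw [← hmin]
    exact sub_le_sub_left (mul_le_mul_of_nonneg_right (hδ i₀ (mem_range.1 hi₀)) hmM) M
  refine sup'_le _ _ fun s hs => ?_
  rcases Nat.eq_zero_or_pos s with rfl | hs0
  · refine (add_zero (n + k) ▸ hfirst).trans (sub_le_sub_left ?_ M)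
    exact mul_le_mul_of_nonneg_right (by nlinarith) hmM
  · have hs : s < k := mem_range.1 hs
    have hMs : ∀ i < k, u (n + s + i) ≤ M := fun i _ => by
      rw [add_assoc]; exact apply_add_le_of_window_le hw0 hw1 hrec hM _
    have hstep := apply_add_le_sub_mul hw0 hw1 hrec hMs (Nat.sub_lt hk hs0)
    rw [show n + s + (k - s) = n + k by omega, show n + s + k = n + k + s by omega] at hstep
    refine hstep.trans (sub_le_sub_left ?_ M)
    calc δ ^ 2 * (M - m) = δ * (δ * (M - m)) := by ring
      _ ≤ w (k - s) * (M - u (n + k)) :=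
        mul_le_mul (hδ _ (Nat.sub_lt hk hs0)) (by linarith) (by positivity)
          (hw0 _ (Nat.sub_lt hk hs0))

end ConvexRecurrence

section ConvexRecurrenceLimit

variable {k : ℕ} {w u : ℕ → ℝ} (hw1 : ∑ i ∈ range k, w i = 1)
  (hrec : ∀ n, u (n + k) = ∑ i ∈ range k, w i * u (n + i))
include hw1 hrec

theorem exists_tendsto_of_convex_recurrence (hw : ∀ i < k, 0 < w i) :
    ∃ L, Tendsto u atTop (𝓝 L) := by
  have hk : 0 < k := Nat.pos_of_ne_zero (by rintro rfl; simp at hw1)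
  have hw0 : ∀ i < k, 0 ≤ w i := fun i hi => (hw i hi).le
  have hne : (range k).Nonempty := nonempty_range_iff.2 hk.ne'
  obtain ⟨i₀, hi₀, hδ_eq⟩ := exists_mem_eq_inf' hne w
  set δ := (range k).inf' hne w
  have hδ0 : 0 < δ := hδ_eq ▸ hw i₀ (mem_range.1 hi₀)
  have hδ : ∀ i < k, δ ≤ w i := fun i hi => inf'_le w (mem_range.2 hi)
  have hanti := windowMax_antitone hw0 hw1 hrec hk
  have hmono := windowMin_monotone hw0 hw1 hrec hk
  have hmM := windowMin_le_windowMax (u := u) hk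
  have hM : Tendsto (windowMax u hk) atTop (𝓝 (⨅ n, windowMax u hk n)) :=
    tendsto_atTop_ciInf hanti ⟨windowMin u hk 0, by
      rintro _ ⟨n, rfl⟩; exact (hmono n.zero_le).trans (hmM n)⟩
  have hm : Tendsto (windowMin u hk) atTop (𝓝 (⨆ n, windowMin u hk n)) :=
    tendsto_atTop_ciSup hmono ⟨windowMax u hk 0, by
      rintro _ ⟨n, rfl⟩; exact (hmM n).trans (hanti n.zero_le)⟩
  set M := ⨅ n, windowMax u hk n
  set m := ⨆ n, windowMin u hk n
  have hcontract : M ≤ M - δ ^ 2 * (M - m) :=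
    le_of_tendsto_of_tendsto' (hM.comp (tendsto_add_atTop_nat k))
      (hM.sub ((hM.sub hm).const_mul (δ ^ 2))) (windowMax_add_le hw0 hw1 hrec hk hδ0.le hδ)
  have hMm : M = m := le_antisymm (by nlinarith [pow_pos hδ0 2])
    (le_of_tendsto_of_tendsto' hm hM hmM)
  refine ⟨M, tendsto_of_tendsto_of_tendsto_of_le_of_le (hMm ▸ hm) hM (fun n => ?_) fun n => ?_⟩
  · simpa using windowMin_le (u := u) (n := n) hk hk
  · simpa using le_windowMax (u := u) (n := n) hk hk

theorem sum_partialSum_mul_apply_add_eq (n : ℕ) :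
    ∑ j ∈ range k, (∑ i ∈ range (j + 1), w i) * u (n + j) =
      ∑ j ∈ range k, (∑ i ∈ range (j + 1), w i) * u j := by
  induction n with
  | zero => simp
  | succ n ih =>
    rw [← ih]
    obtain _ | k := k
    · simp
    calc ∑ j ∈ range (k + 1), (∑ i ∈ range (j + 1), w i) * u (n + 1 + j)
        = ∑ j ∈ range k, (∑ i ∈ range (j + 1), w i) * u (n + (j + 1)) + u (n + (k + 1)) := by
          rw [sum_range_succ, hw1, one_mul, add_assoc n 1 k, add_comm 1 k]
          simp only [add_assoc, add_comm 1]
      _ = ∑ j ∈ range k, (∑ i ∈ range (j + 1 + 1), w i) * u (n + (j + 1)) +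
            (∑ i ∈ range (0 + 1), w i) * u (n + 0) := by
          rw [hrec, sum_range_succ']
          simp only [sum_range_succ _ (_ + 1), add_mul, sum_add_distrib]
          rw [zero_add, sum_range_one, add_assoc]
      _ = ∑ j ∈ range (k + 1), (∑ i ∈ range (j + 1), w i) * u (n + j) := by
          rw [sum_range_succ' _ k]

theorem tendsto_of_convex_recurrence (hw : ∀ i < k, 0 < w i) :
    Tendsto u atTop (𝓝 ((∑ j ∈ range k, (∑ i ∈ range (j + 1), w i) * u j) /
      ∑ j ∈ range k, ∑ i ∈ range (j + 1), w i)) := by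
  obtain ⟨L, hL⟩ := exists_tendsto_of_convex_recurrence hw1 hrec hw
  have hk : 0 < k := Nat.pos_of_ne_zero (by rintro rfl; simp at hw1)
  have hpos : 0 < ∑ j ∈ range k, ∑ i ∈ range (j + 1), w i :=
    sum_pos (fun j hj => sum_pos (fun i hi => hw i ((mem_range.1 hi).trans_le (mem_range.1 hj)))
      nonempty_range_add_one) (nonempty_range_iff.2 hk.ne')
  have hconst : Tendsto (fun n => ∑ j ∈ range k, (∑ i ∈ range (j + 1), w i) * u (n + j)) atTop
      (𝓝 (∑ j ∈ range k, (∑ i ∈ range (j + 1), w i) * L)) :=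
    tendsto_finsetSum _ fun j _ => (hL.comp (tendsto_add_atTop_nat j)).const_mul _
  simp only [sum_partialSum_mul_apply_add_eq hw1 hrec, ← sum_mul] at hconst
  rwa [tendsto_nhds_unique tendsto_const_nhds hconst, mul_div_cancel_left₀ _ hpos.ne']

end ConvexRecurrenceLimit

theorem Filter.Tendsto.cesaro_convolution {a b : ℕ → ℝ} {A B : ℝ} (ha : Tendsto a atTop (𝓝 A))
    (hb : Tendsto b atTop (𝓝 B)) :
    Tendsto (fun n : ℕ => (n⁻¹ : ℝ) * ∑ i ∈ range n, a i * b (n - 1 - i)) atTop (𝓝 (A * B)) := by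
  obtain ⟨C, hC⟩ : ∃ C, ∀ n, |b n| ≤ C := by
    obtain ⟨C, hC⟩ := hb.abs.bddAbove_range
    exact ⟨C, fun n => hC ⟨n, rfl⟩⟩
  have hdev : ∀ {c : ℕ → ℝ} {l : ℝ}, Tendsto c atTop (𝓝 l) →
      Tendsto (fun n : ℕ => (n⁻¹ : ℝ) * ∑ i ∈ range n, |c i - l|) atTop (𝓝 0) :=
    fun {c l} hc => by simpa using ((hc.sub_const l).abs).cesaro
  have hbound : ∀ n : ℕ, 1 ≤ n → |(n⁻¹ : ℝ) * ∑ i ∈ range n, a i * b (n - 1 - i) - A * B| ≤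
      C * ((n⁻¹ : ℝ) * ∑ i ∈ range n, |a i - A|) +
        |A| * ((n⁻¹ : ℝ) * ∑ i ∈ range n, |b i - B|) := by
    intro n hn
    have hn' : (n : ℝ) ≠ 0 := by positivity
    have hsplit : (n⁻¹ : ℝ) * ∑ i ∈ range n, a i * b (n - 1 - i) - A * B =
        (n⁻¹ : ℝ) * ∑ i ∈ range n, ((a i - A) * b (n - 1 - i) + A * (b (n - 1 - i) - B)) := by
      simp only [sum_add_distrib, ← mul_sum, sum_sub_distrib, sum_const, card_range, nsmul_eq_mul,
        sub_mul, sum_sub_distrib]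
      field_simp
      ring
    rw [hsplit, abs_mul, abs_inv, Nat.abs_cast, ← sum_range_reflect (fun i => |b i - B|),
      mul_left_comm C, mul_left_comm |A|, ← mul_add, mul_sum, mul_sum, ← sum_add_distrib]
    refine mul_le_mul_of_nonneg_left ((abs_sum_le_sum_abs _ _).trans (sum_le_sum fun i _ => ?_))
      (by positivity)
    refine (abs_add_le _ _).trans ?_
    rw [abs_mul, abs_mul, mul_comm C]
    gcongr
    exact hC _
  refine tendsto_iff_norm_sub_tendsto_zero.2 <| squeeze_zero'
    (Eventually.of_forall fun n => norm_nonneg _) ((eventually_ge_atTop 1).mono hbound) ?_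
  simpa using ((hdev ha).const_mul C).add ((hdev hb).const_mul |A|)

section Root

variable {k : ℕ} {x : ℝ}

theorem sum_range_pow_sub_mul_one_sub {j : ℕ} (hj : j ≤ k) :
    (∑ i ∈ range (j + 1), x ^ (k - i)) * (1 - x) = x ^ (k - j) - x ^ (k + 1) := by
  induction j with
  | zero => rw [zero_add, sum_range_one, Nat.sub_zero]; ring
  | succ j ih =>
    rw [sum_range_succ, add_mul, ih (by omega), show k - j = k - (j + 1) + 1 by omega]
    ring

variable (hS : ∑ i ∈ range k, x ^ (k - i) = 1)
include hS

theorem pow_succ_eq_two_mul_sub_one : x ^ (k + 1) = 2 * x - 1 := by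
  have h := sum_range_pow_sub_mul_one_sub (x := x) (le_refl k)
  rw [sum_range_succ, hS, Nat.sub_self, pow_zero] at h
  linarith

theorem lt_one_of_sum_pow_eq_one (hk : 2 ≤ k) (hx : 0 < x) : x < 1 := by
  have hsub : {0, k - 1} ⊆ range k := by
    simp only [insert_subset_iff, singleton_subset_iff, mem_range]
    omega
  have h := sum_le_sum_of_subset_of_nonneg hsub fun i _ _ => (pow_pos hx (k - i)).le
  rw [sum_pair (by omega), hS, show k - (k - 1) = 1 by omega, pow_one] at h
  linarith [pow_pos hx (k - 0)]

theorem sum_sum_range_pow_mul_one_sub :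
    (∑ j ∈ range k, ∑ i ∈ range (j + 1), x ^ (k - i)) * (1 - x) = 1 + k - 2 * k * x := by
  rw [sum_mul, sum_congr rfl fun j hj => sum_range_pow_sub_mul_one_sub (mem_range.1 hj).le,
    sum_sub_distrib, hS, sum_const, card_range, nsmul_eq_mul, pow_succ_eq_two_mul_sub_one hS]
  ring

theorem one_add_sub_two_mul_pos (hk : 2 ≤ k) (hx : 0 < x) : 0 < 1 + (k : ℝ) - 2 * k * x := by
  rw [← sum_sum_range_pow_mul_one_sub hS]
  exact mul_pos (sum_pos (fun j _ => sum_pos (fun i _ => pow_pos hx _) nonempty_range_add_one)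
    (nonempty_range_iff.2 (by omega))) (sub_pos.2 (lt_one_of_sum_pow_eq_one hS hk hx))

theorem sum_sum_range_pow_mul_two_mul_pow_mul_one_sub :
    (∑ j ∈ range k, (∑ i ∈ range (j + 1), x ^ (k - i)) * (2 * x) ^ j) * (1 - x) = 1 - x ^ k := by
  have hterm : ∀ j ∈ range k, (∑ i ∈ range (j + 1), x ^ (k - i)) * (2 * x) ^ j * (1 - x) =
      x ^ k * 2 ^ j - x ^ (k + 1) * (2 * x) ^ j := fun j hj => by
    rw [mul_right_comm, sum_range_pow_sub_mul_one_sub (mem_range.1 hj).le, sub_mul, mul_pow,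
      ← mul_assoc, mul_right_comm, ← pow_add, Nat.sub_add_cancel (mem_range.1 hj).le]
  have h2 : (∑ j ∈ range k, (2 : ℝ) ^ j) = 2 ^ k - 1 := by
    rw [← geom_sum_mul (2 : ℝ) k]; norm_num
  rw [sum_mul, sum_congr rfl hterm, sum_sub_distrib, ← mul_sum, ← mul_sum, h2,
    pow_succ_eq_two_mul_sub_one hS, mul_comm (2 * x - 1), geom_sum_mul, mul_pow]
  ring

end Root

theorem tendsto_B_mul_pow_succ {k : ℕ} {x : ℝ} (hk : 2 ≤ k) (hx : 0 < x)
    (hS : ∑ i ∈ range k, x ^ (k - i) = 1) :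
    Tendsto (fun n => (B n k : ℝ) * x ^ (n + 1)) atTop (𝓝 ((1 - x) / (1 + k - 2 * k * x))) := by
  have hrec : ∀ n, (B (n + k) k : ℝ) * x ^ (n + k + 1) =
      ∑ i ∈ range k, x ^ (k - i) * ((B (n + i) k : ℝ) * x ^ (n + i + 1)) := fun n => by
    rw [B_add_eq_sum, Nat.cast_sum, sum_mul]
    refine sum_congr rfl fun i hi => ?_
    rw [mem_range] at hi
    rw [mul_left_comm, ← pow_add, show k - i + (n + i + 1) = n + k + 1 by omega]
  have hlim := tendsto_of_convex_recurrence (u := fun n => (B n k : ℝ) * x ^ (n + 1)) hS hrec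
    fun i _ => pow_pos hx _
  have hinit : ∀ j ∈ range k, (∑ i ∈ range (j + 1), x ^ (k - i)) * ((B j k : ℝ) * x ^ (j + 1)) =
      x * ((∑ i ∈ range (j + 1), x ^ (k - i)) * (2 * x) ^ j) := fun j hj => by
    rw [B_eq_two_pow (mem_range.1 hj)]
    push_cast
    ring
  have hx1 : 0 < 1 - x := sub_pos.2 (lt_one_of_sum_pow_eq_one hS hk hx)
  have hμ := sum_sum_range_pow_mul_one_sub hS
  have hH := sum_sum_range_pow_mul_two_mul_pow_mul_one_sub hS
  have hD := one_add_sub_two_mul_pos hS hk hx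
  have hμ0 : 0 < ∑ j ∈ range k, ∑ i ∈ range (j + 1), x ^ (k - i) :=
    pos_of_mul_pos_left (hμ ▸ hD) hx1.le
  convert hlim using 2
  rw [sum_congr rfl hinit, ← mul_sum, div_eq_div_iff hD.ne' hμ0.ne']
  refine mul_right_cancel₀ hx1.ne' ?_
  linear_combination (1 - x) * hμ - x * (1 + (k : ℝ) - 2 * k * x) * hH +
    (1 + (k : ℝ) - 2 * k * x) * pow_succ_eq_two_mul_sub_one hS

theorem tendsto_v_div_of_tendsto {k : ℕ} {x L : ℝ} (hk : 0 < k) (hx : x ≠ 0)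
    (hL : Tendsto (fun n => (B n k : ℝ) * x ^ (n + 1)) atTop (𝓝 L)) (hL0 : L ≠ 0) :
    Tendsto (fun n => (v n k : ℝ) / (n * B n k)) atTop (𝓝 (1 - L)) := by
  set u : ℕ → ℝ := fun n => B n k * x ^ (n + 1)
  have hratio : ∀ n : ℕ, 1 ≤ n →
      (v n k : ℝ) / (n * B n k) = 1 - (n⁻¹ : ℝ) * (∑ i ∈ range n, u i * u (n - 1 - i)) / u n := by
    intro n hn
    have hcount : (v n k : ℝ) + ∑ i ∈ range n, (B i k : ℝ) * B (n - 1 - i) k = n * B n k := by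
      exact_mod_cast v_add_sum_mul_eq k n
    have hsum : ∑ i ∈ range n, u i * u (n - 1 - i) =
        x ^ (n + 1) * ∑ i ∈ range n, (B i k : ℝ) * B (n - 1 - i) k := by
      rw [mul_sum]
      refine sum_congr rfl fun i hi => ?_
      rw [mem_range] at hi
      rw [mul_mul_mul_comm, ← pow_add, show i + 1 + (n - 1 - i + 1) = n + 1 by omega]
      ring
    have hB : (0 : ℝ) < B n k := by exact_mod_cast B_pos hk n
    have hn' : (0 : ℝ) < n := by exact_mod_cast hn
    rw [hsum, eq_sub_of_add_eq hcount, show u n = B n k * x ^ (n + 1) from rfl]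
    field_simp
  have hlim := (tendsto_const_nhds (x := (1 : ℝ))).sub ((hL.cesaro_convolution hL).div hL hL0)
  rw [mul_self_div_self] at hlim
  exact hlim.congr' ((eventually_ge_atTop 1).mono fun n hn => (hratio n hn).symm)

theorem sum_one_div_pow_eq_one {k : ℕ} {φ : ℝ} (hφ : 0 < φ)
    (hroot : ((X : ℝ[X]) ^ k - ∑ i ∈ range k, X ^ i).eval φ = 0) :
    ∑ i ∈ range k, (1 / φ) ^ (k - i) = 1 := by
  simp only [eval_sub, eval_pow, eval_X, eval_finsetSum] at hroot
  have hterm : ∀ i ∈ range k, (1 / φ) ^ (k - i) = φ ^ i / φ ^ k := fun i hi => by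
    have hsplit : φ ^ k = φ ^ i * φ ^ (k - i) := by
      rw [← pow_add, Nat.add_sub_cancel' (mem_range.1 hi).le]
    rw [hsplit, div_mul_cancel_left₀ (pow_ne_zero _ hφ.ne'), one_div_pow, one_div]
  rw [sum_congr rfl hterm, ← sum_div, ← sub_eq_zero.1 hroot, div_self (pow_pos hφ k).ne']

theorem closed_form_eq_one_sub_div {k : ℕ} {x : ℝ} (hk : 1 ≤ k) (hx0 : x ≠ 0) (hx1 : x ≠ 1)
    (hxk : x ^ (k + 1) = 2 * x - 1) (hD : 1 + (k : ℝ) - 2 * k * x ≠ 0) :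
    (k * x ^ k - k * x ^ (k - 1) - x ^ k + 1) /
        (k * x ^ k - k * x ^ (k - 1) + x ^ (2 * k) - 3 * x ^ k + 2) =
      1 - (1 - x) / (1 + k - 2 * k * x) := by
  have e1 : x ^ k * x ^ 2 = (2 * x - 1) * x := by rw [← pow_add, pow_succ, hxk]
  have e2 : x ^ (k - 1) * x ^ 2 = 2 * x - 1 := by
    rw [← pow_add, show k - 1 + 2 = k + 1 by omega, hxk]
  have e3 : x ^ (2 * k) * x ^ 2 = (2 * x - 1) ^ 2 := by
    rw [← pow_add, show 2 * k + 2 = (k + 1) * 2 by ring, pow_mul, hxk]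
  have hnum :
      (k * x ^ k - k * x ^ (k - 1) - x ^ k + 1) * x ^ 2 = (1 - x) * (k + x - 2 * k * x) := by
    linear_combination ((k : ℝ) - 1) * e1 - k * e2
  have hden : (k * x ^ k - k * x ^ (k - 1) + x ^ (2 * k) - 3 * x ^ k + 2) * x ^ 2 =
      (1 - x) * (1 + k - 2 * k * x) := by
    linear_combination ((k : ℝ) - 3) * e1 - k * e2 + e3
  have hE : k * x ^ k - k * x ^ (k - 1) + x ^ (2 * k) - 3 * x ^ k + 2 ≠ 0 := fun h => by
    rw [h, zero_mul] at hden
    exact mul_ne_zero (sub_ne_zero.2 hx1.symm) hD hden.symm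
  rw [div_eq_iff hE, one_sub_div hD, div_mul_eq_mul_div, eq_div_iff hD]
  refine mul_right_cancel₀ (pow_ne_zero 2 hx0) ?_
  linear_combination (1 + (k : ℝ) - 2 * k * x) * hnum - (k + x - 2 * k * x) * hden

theorem expected_bit_limit (k : ℕ) (hk : 2 ≤ k) (φ : ℝ) (hφ : 0 < φ)
    (hroot : ((X : ℝ[X]) ^ k - ∑ i ∈ Finset.range k, X ^ i).eval φ = 0) :
    Tendsto (fun n : ℕ => (v n k : ℝ) / (n * B n k)) atTop
      (nhds ((k * (1 / φ) ^ k - k * (1 / φ) ^ (k - 1) - (1 / φ) ^ k + 1) /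
        (k * (1 / φ) ^ k - k * (1 / φ) ^ (k - 1) + (1 / φ) ^ (2 * k)
          - 3 * (1 / φ) ^ k + 2))) := by
  have hx : 0 < 1 / φ := by positivity
  have hS := sum_one_div_pow_eq_one hφ hroot
  have hD := one_add_sub_two_mul_pos hS hk hx
  have hx1 := lt_one_of_sum_pow_eq_one hS hk hx
  rw [closed_form_eq_one_sub_div (by omega) hx.ne' hx1.ne (pow_succ_eq_two_mul_sub_one hS) hD.ne']
  exact tendsto_v_div_of_tendsto (by omega) hx.ne' (tendsto_B_mul_pow_succ hk hx hS)
    (div_ne_zero (sub_pos.2 hx1).ne' hD.ne')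
end
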